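/- Let x₁,…,x_m ∈ ℝᵈ and suppose that for some set S ⊆ {1,…,d} with |S| = s ≥ 1 and some constant K ≥ 0 we have (1/m)∑ᵢ (xᵢᵀβ)² ≤ K for all β in C(S,3) ∩ {‖β‖₂ = 1}, where C(S,3) = {v : ‖v_{Sᶜ}‖₁ ≤ 3‖v_S‖₁}. Then for every Δ ∈ ℝᵈ, (1/m)∑ᵢ (xᵢᵀΔ)² ≤ 2K·(3‖Δ‖₁²/s + 2‖Δ‖₂²). -/

import Mathlib

/-!
Split `Δ = T + (Δ - T)`, where `T` spreads the mass `‖Δ‖₁` evenly over `S`. Both pieces lie in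
the cone `C(S,3)`: `T` vanishes off `S`, and on `S` the vector `Δ - T` carries at least
`‖Δ‖₁ - ‖Δ_S‖₁ = ‖Δ_{Sᶜ}‖₁` of mass. Since the quadratic form `Q β = (1/m) ∑ᵢ (xᵢᵀβ)²` and the
cone are homogeneous, the hypothesis on unit vectors gives `Q v ≤ K ‖v‖₂²` on the whole cone, and
`(a + b)² ≤ 2a² + 2b²` together with `‖T‖₂² = ‖Δ‖₁² / s` finishes the estimate.
-/

open Finset

variable {ι : Type*} [Fintype ι]

noncomputable def sampleQuadForm {m : ℕ} (x : Fin m → ι → ℝ) (β : ι → ℝ) : ℝ :=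
  (1 / (m : ℝ)) * ∑ i, (∑ j, x i j * β j) ^ 2

section sampleQuadForm

variable {m : ℕ} (x : Fin m → ι → ℝ)

theorem sampleQuadForm_smul (a : ℝ) (β : ι → ℝ) :
    sampleQuadForm x (a • β) = a ^ 2 * sampleQuadForm x β := by
  simp only [sampleQuadForm, Pi.smul_apply, smul_eq_mul, mul_left_comm _ a, ← mul_sum, mul_pow]
  ring

theorem sampleQuadForm_add_le (β γ : ι → ℝ) :
    sampleQuadForm x (β + γ) ≤ 2 * sampleQuadForm x β + 2 * sampleQuadForm x γ := by
  have hpoint (i : Fin m) : (∑ j, x i j * (β + γ) j) ^ 2 ≤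
      2 * ((∑ j, x i j * β j) ^ 2 + (∑ j, x i j * γ j) ^ 2) := by
    simpa only [Pi.add_apply, mul_add, sum_add_distrib] using
      add_sq_le (a := ∑ j, x i j * β j) (b := ∑ j, x i j * γ j)
  calc sampleQuadForm x (β + γ)
      ≤ (1 / (m : ℝ)) * ∑ i, 2 * ((∑ j, x i j * β j) ^ 2 + (∑ j, x i j * γ j) ^ 2) := by
        unfold sampleQuadForm
        gcongr with i
        exact hpoint i
    _ = 2 * sampleQuadForm x β + 2 * sampleQuadForm x γ := by
        simp only [sampleQuadForm, ← mul_sum, sum_add_distrib]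
        ring

end sampleQuadForm

theorem sum_sq_smul (a : ℝ) (v : ι → ℝ) : ∑ j, (a • v) j ^ 2 = a ^ 2 * ∑ j, v j ^ 2 := by
  simp only [Pi.smul_apply, smul_eq_mul, mul_pow, mul_sum]

theorem sum_sq_sub_le (v w : ι → ℝ) :
    ∑ j, (v - w) j ^ 2 ≤ 2 * (∑ j, v j ^ 2 + ∑ j, w j ^ 2) := by
  rw [← sum_add_distrib, mul_sum]
  gcongr with j
  simpa [sub_eq_add_neg] using add_sq_le (a := v j) (b := -w j)

section restrictedCone

variable [DecidableEq ι]

def restrictedCone (S : Finset ι) (c : ℝ) : Set (ι → ℝ) :=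
  {v | ∑ j ∈ Sᶜ, |v j| ≤ c * ∑ j ∈ S, |v j|}

noncomputable def spreadOver (S : Finset ι) (v : ι → ℝ) : ι → ℝ :=
  fun j => if j ∈ S then (∑ k, |v k|) / #S else 0

theorem smul_mem_restrictedCone {S : Finset ι} {c : ℝ} {v : ι → ℝ}
    (hv : v ∈ restrictedCone S c) (a : ℝ) : a • v ∈ restrictedCone S c := by
  simp only [restrictedCone, Set.mem_ofPred_eq, Pi.smul_apply, smul_eq_mul, abs_mul,
    ← mul_sum] at hv ⊢
  nlinarith [abs_nonneg a]

theorem sampleQuadForm_le_of_mem_restrictedCone {m : ℕ} {x : Fin m → ι → ℝ} {S : Finset ι}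
    {c K : ℝ}
    (h : ∀ β ∈ restrictedCone S c, √(∑ j, β j ^ 2) = 1 → sampleQuadForm x β ≤ K)
    {β : ι → ℝ} (hβ : β ∈ restrictedCone S c) :
    sampleQuadForm x β ≤ K * ∑ j, β j ^ 2 := by
  set r := √(∑ j, β j ^ 2)
  have hr2 : r ^ 2 = ∑ j, β j ^ 2 := Real.sq_sqrt (by positivity)
  by_cases hr : r = 0
  · have hβ0 : β = 0 := by
      ext j
      have := (sum_eq_zero_iff_of_nonneg fun j _ => sq_nonneg (β j)).1
        (by rw [← hr2, hr]; ring) j (mem_univ j)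
      simpa using this
    simp [hβ0, sampleQuadForm]
  · have hr2pos : 0 < r ^ 2 := pow_pos ((Real.sqrt_nonneg _).lt_of_ne' hr) 2
    have hunit : √(∑ j, (r⁻¹ • β) j ^ 2) = 1 := by
      rw [sum_sq_smul, ← hr2, inv_pow, inv_mul_cancel₀ hr2pos.ne', Real.sqrt_one]
    have := h _ (smul_mem_restrictedCone hβ _) hunit
    rw [sampleQuadForm_smul, inv_pow, inv_mul_le_iff₀ hr2pos] at this
    rwa [← hr2, mul_comm]

variable (S : Finset ι) (v : ι → ℝ)

theorem sum_sq_spreadOver : ∑ j, spreadOver S v j ^ 2 = (∑ j, |v j|) ^ 2 / #S := by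
  simp only [spreadOver, ite_pow, zero_pow two_ne_zero, sum_ite_mem, univ_inter,
    sum_const, nsmul_eq_mul]
  rcases (#S).eq_zero_or_pos with hS | hS
  · simp [hS]
  · field_simp

theorem spreadOver_mem_restrictedCone {c : ℝ} (hc : 0 ≤ c) :
    spreadOver S v ∈ restrictedCone S c := by
  have hzero : ∑ j ∈ Sᶜ, |spreadOver S v j| = 0 :=
    sum_eq_zero fun j hj => by simp [spreadOver, (mem_compl.1 hj)]
  simp only [restrictedCone, Set.mem_ofPred_eq, hzero]
  positivity

theorem sub_spreadOver_mem_restrictedCone {S : Finset ι} (hS : S.Nonempty) {c : ℝ}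
    (hc : 1 ≤ c) :
    v - spreadOver S v ∈ restrictedCone S c := by
  set L := ∑ j, |v j|
  have hoff : ∑ j ∈ Sᶜ, |(v - spreadOver S v) j| = ∑ j ∈ Sᶜ, |v j| :=
    sum_congr rfl fun j hj => by simp [spreadOver, mem_compl.1 hj]
  have hon : ∑ j ∈ S, (L / #S - |v j|) ≤ ∑ j ∈ S, |(v - spreadOver S v) j| := by
    gcongr with j hj
    have hL : 0 ≤ L / #S := by positivity
    simpa [spreadOver, hj, abs_sub_comm, abs_of_nonneg hL] using
      abs_sub_abs_le_abs_sub (L / #S) (v j)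
  have hmass : ∑ j ∈ S, (L / #S - |v j|) = ∑ j ∈ Sᶜ, |v j| := by
    rw [sum_sub_distrib, sum_const, nsmul_eq_mul, mul_div_cancel₀ _ (by positivity),
      show L = _ from (sum_add_sum_compl S fun j => |v j|).symm]
    ring
  simp only [restrictedCone, Set.mem_ofPred_eq, hoff]
  nlinarith [sum_nonneg fun j (_ : j ∈ S) => abs_nonneg ((v - spreadOver S v) j)]

end restrictedCone

theorem stmt9 {d m : ℕ} (x : Fin m → Fin d → ℝ) (S : Finset (Fin d)) (s : ℕ)
    (hcard : S.card = s) (hs : 1 ≤ s) (K : ℝ) (hK : 0 ≤ K)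
    (h : ∀ β : Fin d → ℝ,
      (∑ j ∈ Sᶜ, |β j|) ≤ 3 * ∑ j ∈ S, |β j| →
      Real.sqrt (∑ j, (β j) ^ 2) = 1 →
      (1 / (m : ℝ)) * ∑ i, (∑ j, x i j * β j) ^ 2 ≤ K) :
    ∀ Δ : Fin d → ℝ,
      (1 / (m : ℝ)) * ∑ i, (∑ j, x i j * Δ j) ^ 2 ≤
        2 * K * (3 * (∑ j, |Δ j|) ^ 2 / s + 2 * ∑ j, (Δ j) ^ 2) := by
  intro Δ
  subst hcard
  set T := spreadOver S Δ
  have hT := sampleQuadForm_le_of_mem_restrictedCone h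
    (spreadOver_mem_restrictedCone S Δ (c := 3) (by norm_num))
  have hR := sampleQuadForm_le_of_mem_restrictedCone h
    (sub_spreadOver_mem_restrictedCone Δ (card_pos.1 hs) (c := 3) (by norm_num))
  calc sampleQuadForm x Δ = sampleQuadForm x (T + (Δ - T)) := by rw [add_sub_cancel]
    _ ≤ 2 * sampleQuadForm x T + 2 * sampleQuadForm x (Δ - T) := sampleQuadForm_add_le x _ _
    _ ≤ 2 * K * (∑ j, T j ^ 2 + ∑ j, (Δ - T) j ^ 2) := by linarith
    _ ≤ 2 * K * (∑ j, T j ^ 2 + 2 * (∑ j, Δ j ^ 2 + ∑ j, T j ^ 2)) := by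
        gcongr
        exact sum_sq_sub_le Δ T
    _ = 2 * K * (3 * (∑ j, |Δ j|) ^ 2 / #S + 2 * ∑ j, Δ j ^ 2) := by
        rw [sum_sq_spreadOver]
        ring
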